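/- For ρ > 0, β > 0, a ≤ 0 ≤ b, and any real v, the unique minimizer over [a, b] of z ↦ ρ·|z| + (β/2)·(z − v)² equals P_{[a,b]}(S_{ρ/β}(v)), i.e., the projection onto [a,b] of the soft-thresholded value. -/

import Mathlib

noncomputable def shrink (ζ v : ℝ) : ℝ := Real.sign v * max (|v| - ζ) 0

def proj (a b w : ℝ) : ℝ := max (min w b) a

/-! Write `u = S_{ρ/β}(v)` and `w = P_{[a,b]}(u)`. Soft thresholding is the unconstrained
optimality condition: `u = v - (ρ/β) g` for a subgradient `g` of `|·|` at `u`, and since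
`a ≤ 0 ≤ b` the clamp does not change the sign, so `g` is still a subgradient at `w`. Together with
the variational inequality `(w - u)(z - w) ≥ 0` of the projection this makes `ρ g + β (w - v)` a
subgradient of the objective `f` at `w` pointing into `[a, b]`, and strong convexity then gives
`f w + (β/2)(z - w)² ≤ f z` on `[a, b]`, which is both minimality and uniqueness. -/

theorem proj_mem_Icc {a b : ℝ} (hab : a ≤ b) (u : ℝ) : proj a b u ∈ Set.Icc a b :=
  ⟨le_max_right _ _, max_le (min_le_right _ _) hab⟩

theorem proj_variational_ineq {a b z : ℝ} (hab : a ≤ b) (hz : z ∈ Set.Icc a b) (u : ℝ) :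
    0 ≤ (proj a b u - u) * (z - proj a b u) := by
  obtain ⟨hza, hzb⟩ := hz
  rcases le_total u a with hua | hau
  · have : proj a b u = a := max_eq_right ((min_le_left u b).trans hua)
    rw [this]
    exact mul_nonneg (by linarith) (by linarith)
  rcases le_total b u with hbu | hub
  · have : proj a b u = b := by rw [proj, min_eq_right hbu, max_eq_left hab]
    rw [this]
    exact mul_nonneg_of_nonpos_of_nonpos (by linarith) (by linarith)
  · have : proj a b u = u := by rw [proj, min_eq_left hub, max_eq_left hau]
    simp [this]

theorem mul_proj_eq_abs {a b g u : ℝ} (ha : a ≤ 0) (hb : 0 ≤ b) (hgu : g * u = |u|) :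
    g * proj a b u = |proj a b u| := by
  rcases lt_trichotomy u 0 with hu | rfl | hu
  · have hg : g = -1 := by
      rw [abs_of_neg hu] at hgu
      exact mul_right_cancel₀ hu.ne (by linarith)
    have : proj a b u ≤ 0 := max_le ((min_le_left u b).trans hu.le) ha
    rw [hg, abs_of_nonpos this]
    ring
  · simp [proj, min_eq_left hb, max_eq_left ha]
  · have hg : g = 1 := by
      rw [abs_of_pos hu] at hgu
      exact mul_right_cancel₀ hu.ne' (by linarith)
    have : 0 ≤ proj a b u := le_max_of_le_left (le_min hu.le hb)
    rw [hg, one_mul, abs_of_nonneg this]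

theorem exists_subgradient_abs_shrink (t v : ℝ) :
    ∃ g, |g| ≤ 1 ∧ g * shrink t v = |shrink t v| ∧ shrink t v = v - t * g := by
  rcases le_or_gt |v| t with hvt | htv
  · have h0 : shrink t v = 0 := by simp [shrink, hvt]
    refine ⟨v / t, ?_, by simp [h0], ?_⟩
    · rw [abs_div, abs_of_nonneg ((abs_nonneg v).trans hvt)]
      exact div_le_one_of_le₀ hvt ((abs_nonneg v).trans hvt)
    · rcases ((abs_nonneg v).trans hvt).eq_or_lt with rfl | ht
      · simp_all
      · rw [h0, mul_div_cancel₀ v ht.ne', sub_self]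
  have hpos : 0 < |v| - t := sub_pos.mpr htv
  rcases lt_trichotomy v 0 with hv | rfl | hv
  · have hs : shrink t v = v + t := by
      rw [shrink, Real.sign_of_neg hv, max_eq_left hpos.le, abs_of_neg hv]
      ring
    rw [abs_of_neg hv] at hpos
    refine ⟨-1, by simp, ?_, ?_⟩ <;> rw [hs]
    · rw [abs_of_neg (by linarith)]
      ring
    · ring
  · exact ⟨0, by simp, by simp [shrink], by simp [shrink]⟩
  · have hs : shrink t v = v - t := by
      rw [shrink, Real.sign_of_pos hv, max_eq_left hpos.le, abs_of_pos hv, one_mul]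
    rw [abs_of_pos hv] at hpos
    refine ⟨1, by simp, ?_, ?_⟩ <;> rw [hs]
    · rw [one_mul, abs_of_pos hpos]
    · ring

theorem objective_add_sq_le_of_subgradient {ρ β v w z g : ℝ} (hρ : 0 ≤ ρ) (hg : |g| ≤ 1)
    (hgw : g * w = |w|) (hvi : 0 ≤ (ρ * g + β * (w - v)) * (z - w)) :
    ρ * |w| + β / 2 * (w - v) ^ 2 + β / 2 * (z - w) ^ 2 ≤ ρ * |z| + β / 2 * (z - v) ^ 2 := by
  have hgz : g * z ≤ |z| := calc
    g * z ≤ |g| * |z| := by rw [← abs_mul]; exact le_abs_self _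
    _ ≤ |z| := mul_le_of_le_one_left (abs_nonneg z) hg
  calc ρ * |w| + β / 2 * (w - v) ^ 2 + β / 2 * (z - w) ^ 2
      = ρ * (g * z) + β / 2 * (z - v) ^ 2 - (ρ * g + β * (w - v)) * (z - w) := by
        rw [← hgw]; ring
    _ ≤ ρ * (g * z) + β / 2 * (z - v) ^ 2 := sub_le_self _ hvi
    _ ≤ ρ * |z| + β / 2 * (z - v) ^ 2 := by gcongr

theorem proj_shrink_unique_min (ρ β a b v : ℝ)
    (hρ : 0 < ρ) (hβ : 0 < β) (ha : a ≤ 0) (hb : 0 ≤ b) :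
    proj a b (shrink (ρ / β) v) ∈ Set.Icc a b ∧
    (∀ z ∈ Set.Icc a b,
      ρ * |proj a b (shrink (ρ / β) v)| +
        β / 2 * (proj a b (shrink (ρ / β) v) - v) ^ 2
      ≤ ρ * |z| + β / 2 * (z - v) ^ 2) ∧
    (∀ z ∈ Set.Icc a b, z ≠ proj a b (shrink (ρ / β) v) →
      ρ * |proj a b (shrink (ρ / β) v)| +
        β / 2 * (proj a b (shrink (ρ / β) v) - v) ^ 2
      < ρ * |z| + β / 2 * (z - v) ^ 2) := by
  obtain ⟨g, hg, hgu, hu⟩ := exists_subgradient_abs_shrink (ρ / β) v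
  set u := shrink (ρ / β) v
  set w := proj a b u
  have hab : a ≤ b := ha.trans hb
  have hgrowth : ∀ z ∈ Set.Icc a b,
      ρ * |w| + β / 2 * (w - v) ^ 2 + β / 2 * (z - w) ^ 2 ≤ ρ * |z| + β / 2 * (z - v) ^ 2 := by
    intro z hz
    refine objective_add_sq_le_of_subgradient hρ.le hg (mul_proj_eq_abs ha hb hgu) ?_
    have hcoef : ρ * g + β * (w - v) = β * (w - u) := by
      rw [hu]; field_simp; ring
    rw [hcoef, mul_assoc]
    exact mul_nonneg hβ.le (proj_variational_ineq hab hz u)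
  refine ⟨proj_mem_Icc hab u, fun z hz => ?_, fun z hz hne => ?_⟩
  · have : 0 ≤ β / 2 * (z - w) ^ 2 := by positivity
    linarith [hgrowth z hz]
  · have : 0 < β / 2 * (z - w) ^ 2 := by
      have := sub_ne_zero.mpr hne
      positivity
    linarith [hgrowth z hz]
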